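/- Let Δ = Δ₁ + ⋯ + Δ_r be a proper Q-nef-partition in ℝ^d, i.e. Δ_i ≠ {0} for all i = 1,…,r. Then Δ_i ∩ ℤ^d ≠ {0} for all i = 1,…,r; that is, each Δ_i contains a nonzero lattice point. -/

import Mathlib

open Pointwise

noncomputable section

/-- The standard inner product on `n → ℝ`. -/
def dot {n : Type*} [Fintype n] (x y : n → ℝ) : ℝ := ∑ i, x i * y i

/-- The lattice points of `n → ℝ`: points with integer coordinates. -/
def latt (n : Type*) [Fintype n] : Set (n → ℝ) := {x | ∀ i, ∃ m : ℤ, x i = (m : ℝ)}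

/-- Polar dual `S* = {y | ⟨x,y⟩ ≥ -1 ∀ x ∈ S}`. -/
def polarDual {n : Type*} [Fintype n] (S : Set (n → ℝ)) : Set (n → ℝ) :=
  {y | ∀ x ∈ S, -1 ≤ dot x y}

/-- `[S]`: the convex hull of the lattice points of `S`. -/
def latticeHull {n : Type*} [Fintype n] (S : Set (n → ℝ)) : Set (n → ℝ) :=
  convexHull ℝ (S ∩ latt n)

/-- A polytope: the convex hull of a finite set. -/
def IsPolytope {n : Type*} [Fintype n] (P : Set (n → ℝ)) : Prop :=
  ∃ F : Set (n → ℝ), F.Finite ∧ P = convexHull ℝ F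

/-- A lattice polytope: the convex hull of a finite set of lattice points. -/
def IsLatticePolytope {n : Type*} [Fintype n] (P : Set (n → ℝ)) : Prop :=
  ∃ F : Set (n → ℝ), F.Finite ∧ F ⊆ latt n ∧ P = convexHull ℝ F

/-- A full-dimensional polytope `P` with `0` in its interior is Q-reflexive if
`[[P]*] = P*`. -/
def IsQReflexive {n : Type*} [Fintype n] (P : Set (n → ℝ)) : Prop :=
  IsPolytope P ∧ 0 ∈ interior P ∧ latticeHull (polarDual (latticeHull P)) = polarDual P

/-- A full-dimensional lattice polytope `P` with `0` in its interior is almost reflexive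
if `[[P*]*] = P`. -/
def IsAlmostReflexive {n : Type*} [Fintype n] (P : Set (n → ℝ)) : Prop :=
  IsLatticePolytope P ∧ 0 ∈ interior P ∧
    latticeHull (polarDual (latticeHull (polarDual P))) = P

/-- A full-dimensional lattice polytope `P` with `0` in its interior is reflexive
if `P*` is a lattice polytope. -/
def IsReflexive {n : Type*} [Fintype n] (P : Set (n → ℝ)) : Prop :=
  IsLatticePolytope P ∧ 0 ∈ interior P ∧ IsLatticePolytope (polarDual P)

/-- A Q-nef-partition: a Minkowski-sum decomposition `Δ = Δ₁ + ⋯ + Δ_r` of a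
Q-reflexive polytope into polytopes with `0 ∈ Δᵢ`, such that
`[Δ] = [Δ₁] + ⋯ + [Δ_r]`. -/
def IsQNefPartition {d r : ℕ} (Δ : Fin r → Set (Fin d → ℝ)) : Prop :=
  IsQReflexive (∑ i, Δ i) ∧ (∀ i, IsPolytope (Δ i)) ∧
    (∀ i, (0 : Fin d → ℝ) ∈ Δ i) ∧
    latticeHull (∑ i, Δ i) = ∑ i, latticeHull (Δ i)

/-- `∇_j := {y : ⟨x, y⟩ ≥ −δ_{ij} for all x ∈ [Δ_i] and all i}`. -/
def nabla {d r : ℕ} (Δ : Fin r → Set (Fin d → ℝ)) (j : Fin r) : Set (Fin d → ℝ) :=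
  {y | ∀ i, ∀ x ∈ latticeHull (Δ i), -(if i = j then (1 : ℝ) else 0) ≤ dot x y}

/-!
If `Δⱼ` has no nonzero lattice point then `[Δⱼ] = {0}`, so every lattice point `z` of `Δ` lies in
the sum of the other `[Δᵢ]`, and `z + w ∈ Δ` for every `w ∈ Δⱼ`. By Q-reflexivity, every nonzero
lattice point `y` of `[Δ]*` admits a lattice point `z ∈ Δ` with `⟨z, y⟩ ≤ -1`: otherwise all
multiples of `y` would lie in `[[Δ]*] = Δ*`, which is impossible as `0` is interior to `Δ`.
As `y ∈ Δ*` as well, `⟨w, y⟩ ≥ 0`. Hence `⟨w, ·⟩ ≥ 0` on `[[Δ]*] = Δ*`, a neighbourhood of `0`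
because `Δ` is a polytope, and so `w = 0`.
-/

open Filter Topology

section Dot
variable {n : Type*} [Fintype n]

theorem dot_eq_dotProduct (x y : n → ℝ) : dot x y = x ⬝ᵥ y := rfl

theorem convex_setOf_le_dot (c : ℝ) (y : n → ℝ) : Convex ℝ {x : n → ℝ | c ≤ dot x y} :=
  convex_halfSpace_ge ⟨fun a b => add_dotProduct a b y, fun c a => smul_dotProduct c a y⟩ c

theorem eq_zero_of_forall_mem_nhds_nonneg_dot {s : Set (n → ℝ)} {y : n → ℝ}
    (hs : s ∈ 𝓝 0) (h : ∀ x ∈ s, 0 ≤ dot x y) : y = 0 := by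
  have hlim : Tendsto (fun t : ℝ => (-t) • y) (𝓝[>] 0) (𝓝 0) := by
    have : Continuous fun t : ℝ => (-t) • y := continuous_neg.smul continuous_const
    simpa using this.tendsto 0 |>.mono_left nhdsWithin_le_nhds
  obtain ⟨t, hts, ht⟩ := ((hlim.eventually hs).and self_mem_nhdsWithin).exists
  have hneg := h _ hts
  rw [dot_eq_dotProduct, smul_dotProduct, smul_eq_mul] at hneg
  have hself : y ⬝ᵥ y ≤ 0 := by nlinarith
  exact dotProduct_self_eq_zero.mp (le_antisymm hself (dotProduct_self_star_nonneg y))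

theorem nonneg_dot_of_forall_natCast_smul_mem_polarDual {S : Set (n → ℝ)} {y : n → ℝ}
    (h : ∀ k : ℕ, (k : ℝ) • y ∈ polarDual S) {x : n → ℝ} (hx : x ∈ S) : 0 ≤ dot x y := by
  by_contra! hneg
  obtain ⟨k, hk⟩ := exists_nat_gt (1 / -dot x y)
  have hkx := h k x hx
  rw [div_lt_iff₀ (neg_pos.mpr hneg)] at hk
  rw [dot_eq_dotProduct, dotProduct_smul, smul_eq_mul] at hkx
  rw [dot_eq_dotProduct] at hk
  linarith

theorem polarDual_mem_nhds_zero {P : Set (n → ℝ)} (hP : IsPolytope P) : polarDual P ∈ 𝓝 0 := by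
  obtain ⟨F, hF, rfl⟩ := hP
  have hhalf : ∀ x ∈ F, {y : n → ℝ | -1 ≤ dot x y} ∈ 𝓝 0 := fun x _ =>
    (continuous_const.dotProduct continuous_id).continuousAt.preimage_mem_nhds
      (Ici_mem_nhds (by simp))
  exact Filter.mem_of_superset ((Filter.biInter_mem hF).mpr hhalf) fun y hy x hx =>
    convexHull_min (fun z hz => Set.mem_iInter₂.mp hy z hz) (convex_setOf_le_dot (-1) y) hx

end Dot

section Lattice
variable {n : Type*} [Fintype n]

theorem zero_mem_latt : (0 : n → ℝ) ∈ latt n := fun _ => ⟨0, by simp⟩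

theorem natCast_smul_mem_latt {y : n → ℝ} (hy : y ∈ latt n) (k : ℕ) : (k : ℝ) • y ∈ latt n := by
  intro i
  obtain ⟨m, hm⟩ := hy i
  exact ⟨k * m, by simp [hm]⟩

theorem exists_int_dot_eq {x y : n → ℝ} (hx : x ∈ latt n) (hy : y ∈ latt n) :
    ∃ m : ℤ, dot x y = m := by
  choose mx hmx using hx
  choose my hmy using hy
  exact ⟨∑ i, mx i * my i, by simp [dot, hmx, hmy]⟩

theorem IsPolytope.convex {P : Set (n → ℝ)} (hP : IsPolytope P) : Convex ℝ P := by
  obtain ⟨F, -, rfl⟩ := hP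
  exact convex_convexHull ℝ F

theorem latticeHull_subset {S : Set (n → ℝ)} (hS : Convex ℝ S) : latticeHull S ⊆ S :=
  convexHull_min Set.inter_subset_left hS

theorem inter_latt_subset_latticeHull (S : Set (n → ℝ)) : S ∩ latt n ⊆ latticeHull S :=
  subset_convexHull ℝ _

theorem nonneg_dot_of_forall_latt_neg_one_lt {S : Set (n → ℝ)} {y : n → ℝ} (hy : y ∈ latt n)
    (h : ∀ z ∈ S ∩ latt n, -1 < dot z y) {x : n → ℝ} (hx : x ∈ latticeHull S) :
    0 ≤ dot x y := by
  refine convexHull_min (fun z hz => ?_) (convex_setOf_le_dot 0 y) hx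
  obtain ⟨m, hm⟩ := exists_int_dot_eq hz.2 hy
  have hm' : (-1 : ℤ) < m := by exact_mod_cast hm ▸ h z hz
  show 0 ≤ dot z y
  rw [hm]
  exact_mod_cast (by omega : (0 : ℤ) ≤ m)

end Lattice

section QReflexive
variable {n : Type*} [Fintype n] {P : Set (n → ℝ)}

theorem IsQReflexive.exists_dot_le_neg_one (hP : IsQReflexive P) {y : n → ℝ} (hy : y ∈ latt n)
    (hy0 : y ≠ 0) : ∃ z ∈ P ∩ latt n, dot z y ≤ -1 := by
  obtain ⟨-, hint, hrefl⟩ := hP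
  by_contra! h
  have hmul : ∀ k : ℕ, (k : ℝ) • y ∈ polarDual P := fun k => by
    rw [← hrefl]
    refine inter_latt_subset_latticeHull _ ⟨fun x hx => ?_, natCast_smul_mem_latt hy k⟩
    have hxy := nonneg_dot_of_forall_latt_neg_one_lt hy h hx
    rw [dot_eq_dotProduct] at hxy
    rw [dot_eq_dotProduct, dotProduct_smul, smul_eq_mul]
    nlinarith
  exact hy0 (eq_zero_of_forall_mem_nhds_nonneg_dot (mem_interior_iff_mem_nhds.mp hint)
    fun x hx => nonneg_dot_of_forall_natCast_smul_mem_polarDual hmul hx)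

theorem IsQReflexive.eq_zero_of_forall_latt_nonneg_dot (hP : IsQReflexive P) {w : n → ℝ}
    (h : ∀ y ∈ polarDual (latticeHull P) ∩ latt n, 0 ≤ dot y w) : w = 0 := by
  obtain ⟨hpoly, -, hrefl⟩ := hP
  refine eq_zero_of_forall_mem_nhds_nonneg_dot (polarDual_mem_nhds_zero hpoly) fun y hy => ?_
  rw [← hrefl] at hy
  exact convexHull_min h (convex_setOf_le_dot 0 w) hy

end QReflexive

theorem Set.add_sum_subset_sum {ι M : Type*} [Fintype ι] [DecidableEq ι] [AddCommMonoid M]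
    {A B : ι → Set M} (hBA : ∀ i, B i ⊆ A i) {j : ι} (hBj : B j = 0) :
    A j + ∑ i, B i ⊆ ∑ i, A i := by
  rw [← Finset.add_sum_erase _ B (Finset.mem_univ j),
    ← Finset.add_sum_erase _ A (Finset.mem_univ j), hBj, zero_add]
  exact Set.add_subset_add subset_rfl (Set.finsetSum_subset_finsetSum _ _ _ fun i _ => hBA i)

namespace IsQNefPartition
variable {d r : ℕ} {Δ : Fin r → Set (Fin d → ℝ)}

theorem nonneg_dot_of_latticeHull_eq_zero (hQ : IsQNefPartition Δ) {j : Fin r}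
    (hj : latticeHull (Δ j) = {0}) {w : Fin d → ℝ} (hw : w ∈ Δ j) {y : Fin d → ℝ}
    (hy : y ∈ polarDual (latticeHull (∑ i, Δ i)) ∩ latt (Fin d)) : 0 ≤ dot y w := by
  obtain ⟨hP, hpolys, -, hdecomp⟩ := hQ
  rcases eq_or_ne y 0 with rfl | hy0
  · simp [dot]
  obtain ⟨z, hz, hzy⟩ := hP.exists_dot_le_neg_one hy.2 hy0
  have hwz : w + z ∈ ∑ i, Δ i := by
    refine Set.add_sum_subset_sum (fun i => latticeHull_subset (hpolys i).convex)
      (hj.trans Set.singleton_zero) (Set.add_mem_add hw ?_)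
    rw [← hdecomp]
    exact inter_latt_subset_latticeHull _ hz
  have hyP : y ∈ polarDual (∑ i, Δ i) := hP.2.2 ▸ inter_latt_subset_latticeHull _ hy
  have hwzy := hyP _ hwz
  rw [dot_eq_dotProduct, add_dotProduct] at hwzy
  rw [dot_eq_dotProduct] at hzy ⊢
  rw [dotProduct_comm]
  linarith

theorem eq_singleton_zero_of_latticeHull_eq (hQ : IsQNefPartition Δ) {j : Fin r}
    (hj : latticeHull (Δ j) = {0}) : Δ j = {0} :=
  Set.eq_singleton_iff_unique_mem.mpr ⟨hQ.2.2.1 j, fun _ hw =>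
    hQ.1.eq_zero_of_forall_latt_nonneg_dot fun _ hy =>
      hQ.nonneg_dot_of_latticeHull_eq_zero hj hw hy⟩

end IsQNefPartition

theorem proper_qnefpartition_lattice_points_general {d r : ℕ}
    (Δ : Fin r → Set (Fin d → ℝ)) (hQ : IsQNefPartition Δ)
    (hproper : ∀ i, Δ i ≠ {0}) :
    ∀ i, Δ i ∩ latt (Fin d) ≠ {0} ∧ ∃ x ∈ Δ i ∩ latt (Fin d), x ≠ 0 := by
  intro j
  have hex : ∃ x ∈ Δ j ∩ latt (Fin d), x ≠ 0 := by
    by_contra! h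
    have hlatt : Δ j ∩ latt (Fin d) = {0} :=
      Set.eq_singleton_iff_unique_mem.mpr ⟨⟨hQ.2.2.1 j, zero_mem_latt⟩, h⟩
    refine hproper j (hQ.eq_singleton_zero_of_latticeHull_eq ?_)
    rw [latticeHull, hlatt, convexHull_singleton]
  obtain ⟨x, hx, hx0⟩ := hex
  exact ⟨fun h => hx0 (h ▸ hx : x ∈ ({0} : Set (Fin d → ℝ))), x, hx, hx0⟩

/-- If `Δ = Δ₁ + ⋯ + Δ_r` is a proper Q-nef-partition (`Δ_i ≠ {0}` for
all `i`), then `Δ_i ∩ ℤ^d ≠ {0}` for all `i`; that is, each `Δ_i` contains a nonzero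
lattice point. -/
theorem proper_qnefpartition_lattice_points {d r : ℕ} (hd : 0 < d)
    (Δ : Fin r → Set (Fin d → ℝ)) (hQ : IsQNefPartition Δ)
    (hproper : ∀ i, Δ i ≠ {0}) :
    ∀ i, Δ i ∩ latt (Fin d) ≠ {0} ∧ ∃ x ∈ Δ i ∩ latt (Fin d), x ≠ 0 :=
  proper_qnefpartition_lattice_points_general Δ hQ hproper
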